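/- Let T be a bounded operator on a complex Hilbert space H, decomposed as T = [[A,B],[0,0]] with respect to H = closure(R(T)) ⊕ N(T*). Then T and T* coincide on M := closure(R(T)) ∩ closure(R(T*)) if and only if A and A* coincide on M and M ⊆ N(B*). -/

import Mathlib

/-!
For `x ∈ K = closure (range T)` we have `T x ∈ K`, so `A x = T x`, while `A† x` and `B† x` are the
components of `T† x` in `K` and in `ker T† = Kᗮ`. Hence `T x = T† x` splits into `A x = A† x`
and `B† x = 0`.
-/

open ContinuousLinearMap

variable {H : Type*} [NormedAddCommGroup H] [InnerProductSpace ℂ H] [CompleteSpace H]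

noncomputable def opB (T : H →L[ℂ] H) (K N : Submodule ℂ H) [CompleteSpace K] :
    N →L[ℂ] K :=
  (Submodule.orthogonalProjectionOnto K) ∘L (T ∘L N.subtypeL)

section

variable {𝕜 E F : Type*} [RCLike 𝕜] [NormedAddCommGroup E] [InnerProductSpace 𝕜 E]
  [NormedAddCommGroup F] [InnerProductSpace 𝕜 F]

theorem ker_adjoint_eq_orthogonal_closure_range [CompleteSpace E] [CompleteSpace F]
    (T : E →L[𝕜] F) :
    LinearMap.ker (adjoint T : F →ₗ[𝕜] E) =
      (LinearMap.range (T : E →ₗ[𝕜] F)).topologicalClosureᗮ := by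
  rw [Submodule.orthogonal_closure, T.orthogonal_range]

theorem Submodule.eq_iff_starProjection_eq_and_starProjection_eq_zero {K N : Submodule 𝕜 E}
    [K.HasOrthogonalProjection] [N.HasOrthogonalProjection] (hN : N = Kᗮ) {u : E} (hu : u ∈ K)
    (v : E) : u = v ↔ K.starProjection v = u ∧ N.starProjection v = 0 := by
  subst hN
  constructor
  · rintro rfl
    exact ⟨K.starProjection_eq_self_iff.mpr hu, K.starProjection_orthogonal_apply_eq_zero hu⟩
  · rintro ⟨hK, hKperp⟩
    rw [← K.starProjection_add_starProjection_orthogonal v, hK, hKperp, add_zero]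

end

section

variable (T : H →L[ℂ] H) (K N : Submodule ℂ H) [CompleteSpace K]

omit [CompleteSpace H] in
theorem coe_opB_apply (x : N) : (opB T K N x : H) = K.starProjection (T x) := rfl

variable [CompleteSpace N]

theorem adjoint_opB : adjoint (opB T K N) = N.orthogonalProjectionOnto ∘L adjoint T ∘L K.subtypeL := by
  rw [opB, adjoint_comp, adjoint_comp, Submodule.adjoint_subtypeL,
    Submodule.adjoint_orthogonalProjectionOnto, comp_assoc]

theorem coe_adjoint_opB_apply (x : K) :
    (adjoint (opB T K N) x : H) = N.starProjection (adjoint T x) := by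
  rw [adjoint_opB]
  rfl

variable {K N}

theorem apply_eq_adjoint_apply_iff_opB (hT : ∀ y, T y ∈ K) (hN : N = Kᗮ) (x : K) :
    T x = adjoint T x ↔ opB T K K x = adjoint (opB T K K) x ∧ adjoint (opB T K N) x = 0 := by
  rw [Submodule.eq_iff_starProjection_eq_and_starProjection_eq_zero hN (hT x), Subtype.ext_iff,
    ← Submodule.coe_eq_zero, coe_opB_apply, coe_adjoint_opB_apply, coe_adjoint_opB_apply,
    K.starProjection_eq_self_iff.mpr (hT x), eq_comm]

end

theorem stmt7 (T : H →L[ℂ] H) :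
    haveI : CompleteSpace (LinearMap.range (T : H →ₗ[ℂ] H)).topologicalClosure :=
      (LinearMap.range (T : H →ₗ[ℂ] H)).isClosed_topologicalClosure.completeSpace_coe
    haveI : CompleteSpace (LinearMap.ker (adjoint T : H →ₗ[ℂ] H)) :=
      (ContinuousLinearMap.isClosed_ker (adjoint T)).completeSpace_coe
    (let K := (LinearMap.range (T : H →ₗ[ℂ] H)).topologicalClosure
     let M := K ⊓ (LinearMap.range (adjoint T : H →ₗ[ℂ] H)).topologicalClosure
     let A := opB T K K
     let B := opB T K (LinearMap.ker (adjoint T : H →ₗ[ℂ] H))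
     (∀ x ∈ M, T x = adjoint T x) ↔
       (∀ x : K, (x : H) ∈ M → A x = adjoint A x) ∧
         ∀ x : K, (x : H) ∈ M → adjoint B x = 0) := by
  intro K M A B
  have hT (y : H) : T y ∈ K := Submodule.le_topologicalClosure _ ⟨y, rfl⟩
  have key (x : K) := apply_eq_adjoint_apply_iff_opB T hT (ker_adjoint_eq_orthogonal_closure_range T) x
  constructor
  · intro h
    exact ⟨fun x hx ↦ ((key x).1 (h x hx)).1, fun x hx ↦ ((key x).1 (h x hx)).2⟩
  · rintro ⟨hA, hB⟩ x hx
    exact (key ⟨x, hx.1⟩).2 ⟨hA _ hx, hB _ hx⟩
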